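/- Let f and g be symmetric functions of degree at most n. If f[Ξ_μ] = g[Ξ_μ] for every partition μ with |μ| ≥ n, then f = g. -/

import Mathlib

open scoped BigOperators

/-- Same eigenvalue collection, as a multiset. -/
noncomputable def xiM (μ : Multiset ℕ) : Multiset ℂ :=
  μ.bind fun r => (Multiset.range r).map fun k =>
    Complex.exp (2 * Real.pi * Complex.I * k / r)

/-- Evaluation of the power sum `p_n` on a multiset of values. -/
noncomputable def pEvalM (n : ℕ) (S : Multiset ℂ) : ℂ := (S.map (· ^ n)).sum

/-- The ring of symmetric functions, modeled as polynomials in the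
(algebraically independent) power sums `p_1, p_2, …`:  variable `k : ℕ+` stands for `p_k`. -/
abbrev SymF := MvPolynomial ℕ+ ℂ

/-- Evaluation of a symmetric function at the eigenvalues `Ξ_μ` of a permutation
matrix of cycle type `μ` (each `p_k` goes to `p_k[Ξ_μ]`). -/
noncomputable def evalXi (μ : Multiset ℕ) (f : SymF) : ℂ :=
  MvPolynomial.eval (fun k : ℕ+ => pEvalM (k : ℕ) (xiM μ)) f

/-!
Since `∑_{j<r} ζ_r^{jk}` is `r` if `r ∣ k` and `0` otherwise, `p_k[Ξ_μ] = ∑_{r ∈ μ, r ∣ k} r`.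
For the cycle type `μ` with `n + a_1` parts `1` and `a_d` parts `d` (`d ≥ 2`) this is
`n + ∑_{d ∣ k} d a_d`, affine in `a`. So `f - g`, composed with this substitution, is a
polynomial vanishing on all of `ℕ^(ℕ)`, hence zero; and the substitution is invertible by
Möbius inversion, so `f - g = 0`.
-/

open MvPolynomial Finset

theorem IsPrimitiveRoot.sum_range_pow_pow {R : Type*} [CommRing R] [IsDomain R] {ζ : R} {r : ℕ}
    (hζ : IsPrimitiveRoot ζ r) (k : ℕ) :
    ∑ j ∈ range r, (ζ ^ j) ^ k = if r ∣ k then (r : R) else 0 := by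
  simp_rw [← pow_mul, mul_comm _ k, pow_mul]
  split_ifs with hdvd
  · simp [(hζ.pow_eq_one_iff_dvd k).mpr hdvd]
  · have hne : ζ ^ k ≠ 1 := fun h => hdvd ((hζ.pow_eq_one_iff_dvd k).mp h)
    have hroot : (ζ ^ k) ^ r = 1 := by rw [← pow_mul, mul_comm, pow_mul, hζ.pow_eq_one, one_pow]
    simpa [hroot, sub_eq_zero, hne] using geom_sum_mul (ζ ^ k) r

theorem Complex.sum_range_exp_pow (r k : ℕ) :
    ∑ j ∈ range r, Complex.exp (2 * Real.pi * Complex.I * j / r) ^ k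
      = if r ∣ k then (r : ℂ) else 0 := by
  rcases eq_or_ne r 0 with rfl | hr
  · simp
  have hexp (j : ℕ) : Complex.exp (2 * Real.pi * Complex.I * j / r)
      = Complex.exp (2 * Real.pi * Complex.I / r) ^ j := by
    rw [← Complex.exp_nat_mul]; ring_nf
  simp_rw [hexp]
  exact (Complex.isPrimitiveRoot_exp r hr).sum_range_pow_pow k

theorem pEvalM_xiM (k : ℕ) (μ : Multiset ℕ) :
    pEvalM k (xiM μ) = (μ.map fun r => if r ∣ k then (r : ℂ) else 0).sum := by
  rw [pEvalM, xiM, Multiset.map_bind, Multiset.sum_bind]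
  congr 1
  refine Multiset.map_congr rfl fun r _ => ?_
  -- `xiM` casts `Multiset.range r` to `Multiset ℂ` by a monadic lift, i.e. a `bind` with `pure`
  rw [← Complex.sum_range_exp_pow, Finset.sum, Finset.range_val]
  simp only [Multiset.pure_def, Multiset.bind_def, Multiset.bind_singleton, Multiset.map_map,
    Function.comp_apply]

theorem Finsupp.sum_map_toMultiset_ite_dvd {R : Type*} [Semiring R] (a : ℕ →₀ ℕ) {k : ℕ}
    (hk : k ≠ 0) :
    ((Finsupp.toMultiset a).map fun r => if r ∣ k then (r : R) else 0).sum
      = ∑ d ∈ k.divisors, (d : R) * a d := by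
  classical
  rw [Finset.sum_multiset_map_count, Finsupp.toFinset_toMultiset]
  simp_rw [Finsupp.count_toMultiset, nsmul_eq_mul, mul_ite, mul_zero, ← Finset.sum_filter]
  refine Finset.sum_subset_zero_on_sdiff (fun d hd => ?_) (fun d hd => ?_)
    fun d _ => Nat.cast_comm _ _
  · simp only [Finset.mem_filter] at hd
    exact Nat.mem_divisors.mpr ⟨hd.2, hk⟩
  · simp only [Finset.mem_sdiff, Finset.mem_filter, Nat.mem_divisors, Finsupp.mem_support_iff] at hd
    simp [show a d = 0 by tauto]

noncomputable def cycleTypeOf (n : ℕ) (a : ℕ →₀ ℕ) : Multiset ℕ :=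
  Multiset.replicate n 1 + Finsupp.toMultiset (a.erase 0)

theorem pos_of_mem_cycleTypeOf {n : ℕ} {a : ℕ →₀ ℕ} {i : ℕ} (hi : i ∈ cycleTypeOf n a) :
    0 < i := by
  rcases Multiset.mem_add.mp hi with hi | hi
  · rw [Multiset.eq_of_mem_replicate hi]; exact one_pos
  · rw [Finsupp.mem_toMultiset, Finsupp.support_erase] at hi
    exact Nat.pos_of_ne_zero (Finset.ne_of_mem_erase hi)

theorem le_sum_cycleTypeOf (n : ℕ) (a : ℕ →₀ ℕ) : n ≤ (cycleTypeOf n a).sum := by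
  simp [cycleTypeOf]

theorem evalXi_cycleTypeOf (n : ℕ) (a : ℕ →₀ ℕ) (f : SymF) :
    evalXi (cycleTypeOf n a) f
      = eval (fun k : ℕ+ => n + ∑ d ∈ (k : ℕ).divisors, (d : ℂ) * a d) f := by
  refine congrArg (eval · f) (funext fun k => ?_)
  rw [pEvalM_xiM, cycleTypeOf, Multiset.map_add, Multiset.sum_add,
    Finsupp.sum_map_toMultiset_ite_dvd _ k.ne_zero]
  congr 1
  · simp
  · refine sum_congr rfl fun d hd => ?_
    rw [Finsupp.erase_ne (Nat.pos_of_mem_divisors hd).ne']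

theorem MvPolynomial.eq_zero_of_forall_eval_natCast_eq_zero {R σ : Type*} [CommRing R]
    [IsDomain R] [CharZero R] {p : MvPolynomial σ R}
    (h : ∀ a : σ →₀ ℕ, eval (fun i => (a i : R)) p = 0) : p = 0 := by
  classical
  refine funext_set (fun _ => Set.range ((↑) : ℕ → R))
    (fun _ => Set.infinite_range_of_injective Nat.cast_injective) fun x hx => ?_
  choose b hb using fun i => hx i trivial
  let a : σ →₀ ℕ := Finsupp.onFinset p.vars (fun i => if i ∈ p.vars then b i else 0)
    fun i hi => by_contra fun h => hi (if_neg h)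
  rw [map_zero, ← h a]
  refine hom_congr_vars (by ext; simp) (fun i hi _ => ?_) rfl
  simp [a, hi, hb]

theorem exists_sum_divisors_mul_eq {K : Type*} [Field K] [CharZero K] (x : ℕ → K) :
    ∃ c : ℕ → K, ∀ k > 0, ∑ d ∈ k.divisors, ((d : ℕ) : K) * c d = x k := by
  refine ⟨fun d => (∑ y ∈ d.divisorsAntidiagonal, (ArithmeticFunction.moebius y.1 : K) * x y.2) / d,
    ArithmeticFunction.sum_eq_iff_sum_mul_moebius_eq.mpr fun d hd => ?_⟩
  have : (d : K) ≠ 0 := by exact_mod_cast hd.ne'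
  field_simp

/-- At `z = n` and `X = a`, the image of `p_k` is `p_k[Ξ_μ]` for `μ = cycleTypeOf n a`. -/
noncomputable def divisorSubst {R : Type*} [CommSemiring R] (z : R) (k : ℕ+) : MvPolynomial ℕ R :=
  C z + ∑ d ∈ (k : ℕ).divisors, C (d : R) * X d

theorem eval_bind₁_divisorSubst {R : Type*} [CommSemiring R] (z : R) (c : ℕ → R)
    (p : MvPolynomial ℕ+ R) :
    eval c (bind₁ (divisorSubst z) p)
      = eval (fun k : ℕ+ => z + ∑ d ∈ (k : ℕ).divisors, (d : R) * c d) p := by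
  rw [eval, eval₂Hom_bind₁]
  exact congrArg (eval · p) (funext fun k => by simp [divisorSubst])

theorem symF_eq_of_eval_large_general (n : ℕ) (f g : SymF)
    (h : ∀ μ : Multiset ℕ, (∀ i ∈ μ, 0 < i) → n ≤ μ.sum → evalXi μ f = evalXi μ g) :
    f = g := by
  have hsubst : bind₁ (divisorSubst (n : ℂ)) (f - g) = 0 :=
    eq_zero_of_forall_eval_natCast_eq_zero fun a => by
      rw [eval_bind₁_divisorSubst, map_sub, sub_eq_zero, ← evalXi_cycleTypeOf, ← evalXi_cycleTypeOf]
      exact h _ (fun i => pos_of_mem_cycleTypeOf) (le_sum_cycleTypeOf n a)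
  refine sub_eq_zero.mp (MvPolynomial.funext fun x => ?_)
  obtain ⟨c, hc⟩ := exists_sum_divisors_mul_eq fun k => (if hk : 0 < k then x ⟨k, hk⟩ else 0) - n
  have hx : x = fun k : ℕ+ => (n : ℂ) + ∑ d ∈ (k : ℕ).divisors, (d : ℂ) * c d := by
    funext k
    rw [hc k k.pos, dif_pos k.pos, add_sub_cancel]
    rfl
  rw [hx, ← eval_bind₁_divisorSubst, hsubst, map_zero, map_zero]

/-- Two symmetric functions (polynomials in the power sums `p_k`, `k : ℕ+`) of degree at
most `n` which agree at the eigenvalues `Ξ_μ` of permutation matrices for all partitions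
`μ` with `|μ| ≥ n` are equal. -/
theorem symF_eq_of_eval_large (n : ℕ) (f g : SymF)
    (hf : ∀ m ∈ f.support, (m.sum fun k e => (k : ℕ) * e) ≤ n)
    (hg : ∀ m ∈ g.support, (m.sum fun k e => (k : ℕ) * e) ≤ n)
    (h : ∀ μ : Multiset ℕ, (∀ i ∈ μ, 0 < i) → n ≤ μ.sum → evalXi μ f = evalXi μ g) :
    f = g :=
  symF_eq_of_eval_large_general n f g h
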